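/- Let ρ_AB = ∑_i p_i φ_{A,i} ⊗ σ_{AB,i} be a bipartite density matrix on (H_{A'} ⊗ H_{A''}) ⊗ H_B (all finite-dimensional), where the p_i ≥ 0 sum to 1, each φ_{A,i} is a density matrix on H_{A'}, the φ_{A,i} are mutually orthogonal (φ_{A,i} φ_{A,j} = 0 for i ≠ j), and each σ_{AB,i} is a density matrix on H_{A''} ⊗ H_B. Then the negativity across the A|B cut satisfies N[ρ_AB] = ∑_i p_i N[σ_{AB,i}], where the partial transpose is taken on the B factor in both cases. -/

import Mathlib

open Matrix Kronecker
open scoped ComplexOrder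

/-- The matrix absolute value `|M| := √(Mᴴ M)`. -/
noncomputable def matAbs {n : Type*} [Fintype n] [DecidableEq n]
    (M : Matrix n n ℂ) : Matrix n n ℂ :=
  (Matrix.posSemidef_conjTranspose_mul_self M).1.eigenvectorUnitary.1 *
    Matrix.diagonal ((↑) ∘ (Real.sqrt ∘ (Matrix.posSemidef_conjTranspose_mul_self M).1.eigenvalues)) *
    (star (Matrix.posSemidef_conjTranspose_mul_self M).1.eigenvectorUnitary : Matrix n n ℂ)

/-- The trace norm `‖M‖₁ := Tr √(Mᴴ M)`. -/
noncomputable def traceNorm {n : Type*} [Fintype n] [DecidableEq n]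
    (M : Matrix n n ℂ) : ℂ :=
  (matAbs M).trace

/-- Partial transpose on the second factor of a bipartite matrix. -/
def ptB {a b : Type*} (ρ : Matrix (a × b) (a × b) ℂ) : Matrix (a × b) (a × b) ℂ :=
  Matrix.of fun x y => ρ (x.1, y.2) (y.1, x.2)

/-- Negativity of a bipartite matrix on `H_A ⊗ H_B`, with partial transpose on `B`:
`N[ρ] := (1/2)(‖ρ^{T_B}‖₁ − Tr ρ)`. -/
noncomputable def negativityAB {a b : Type*} [Fintype a] [DecidableEq a]
    [Fintype b] [DecidableEq b] (ρ : Matrix (a × b) (a × b) ℂ) : ℂ :=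
  (1 / 2 : ℂ) * (traceNorm (ptB ρ) - ρ.trace)

/-- Partial transpose on the third (B) factor of a tripartite matrix on
`H_{A'} ⊗ H_{A''} ⊗ H_B`. -/
def ptB3 {a' a'' b : Type*} (ρ : Matrix (a' × a'' × b) (a' × a'' × b) ℂ) :
    Matrix (a' × a'' × b) (a' × a'' × b) ℂ :=
  Matrix.of fun x y => ρ (x.1, x.2.1, y.2.2) (y.1, y.2.1, x.2.2)

/-- Negativity across the `A|B` cut of a matrix on `(H_{A'} ⊗ H_{A''}) ⊗ H_B`,
with partial transpose on `B`. -/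
noncomputable def negativityA'A''B {a' a'' b : Type*} [Fintype a'] [DecidableEq a']
    [Fintype a''] [DecidableEq a''] [Fintype b] [DecidableEq b]
    (ρ : Matrix (a' × a'' × b) (a' × a'' × b) ℂ) : ℂ :=
  (1 / 2 : ℂ) * (traceNorm (ptB3 ρ) - ρ.trace)

/-!
Partial transposition on `B` only touches the second tensor factor, so
`ρ^{T_B} = ∑ p_i φ_i ⊗ σ_i^{T_B}`. For `S = ∑ p_i φ_i ⊗ |σ_i^{T_B}|`, orthogonality of the `φ_i`
kills the cross terms of both `S²` and `(ρ^{T_B})ᴴ ρ^{T_B}`, which therefore agree; as `S ≥ 0`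
it is the square root `|ρ^{T_B}|`, and taking traces with `Tr φ_i = 1` gives the formula.
-/

lemma ptB3_sum {ι a' a'' b : Type*} (s : Finset ι)
    (ρ : ι → Matrix (a' × a'' × b) (a' × a'' × b) ℂ) :
    ptB3 (∑ i ∈ s, ρ i) = ∑ i ∈ s, ptB3 (ρ i) := by
  ext x y
  simp [ptB3, Matrix.sum_apply]

lemma ptB3_kronecker {a' a'' b : Type*} (A : Matrix a' a' ℂ)
    (B : Matrix (a'' × b) (a'' × b) ℂ) :
    ptB3 (A ⊗ₖ B) = A ⊗ₖ ptB B := by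
  ext x y
  simp [ptB3, ptB]

lemma sum_kronecker_mul_sum_kronecker_of_orthogonal {ι m n R : Type*} [Fintype ι] [Fintype m]
    [Fintype n] [CommSemiring R] (A : ι → Matrix m m R) (X Y : ι → Matrix n n R)
    (hA : ∀ i j, i ≠ j → A i * A j = 0) :
    (∑ i, A i ⊗ₖ X i) * (∑ j, A j ⊗ₖ Y j) = ∑ i, (A i * A i) ⊗ₖ (X i * Y i) := by
  classical
  rw [Finset.sum_mul_sum]
  refine Finset.sum_congr rfl fun i _ => ?_
  rw [Finset.sum_eq_single i
    (fun j _ hji => by rw [← mul_kronecker_mul, hA i j hji.symm, zero_kronecker]) (by simp),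
    mul_kronecker_mul]

section MatAbs

open scoped MatrixOrder

variable {n : Type*} [Fintype n] [DecidableEq n]

lemma matAbs_eq_cfcSqrt (M : Matrix n n ℂ) : matAbs M = CFC.sqrt (Mᴴ * M) := by
  rw [CFC.sqrt_eq_real_sqrt _ (posSemidef_conjTranspose_mul_self M).nonneg, cfcₙ_eq_cfc,
    (posSemidef_conjTranspose_mul_self M).1.cfc_eq]
  rfl

lemma posSemidef_matAbs (M : Matrix n n ℂ) : (matAbs M).PosSemidef := by
  rw [matAbs_eq_cfcSqrt]
  exact (CFC.sqrt_nonneg _).posSemidef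

lemma matAbs_mul_self (M : Matrix n n ℂ) : matAbs M * matAbs M = Mᴴ * M := by
  rw [matAbs_eq_cfcSqrt]
  exact CFC.sqrt_mul_sqrt_self _ (posSemidef_conjTranspose_mul_self M).nonneg

lemma matAbs_eq_of_mul_self {M S : Matrix n n ℂ} (hS : S.PosSemidef) (h : S * S = Mᴴ * M) :
    matAbs M = S := by
  rw [matAbs_eq_cfcSqrt]
  exact (CFC.sqrt_eq_iff _ _ (posSemidef_conjTranspose_mul_self M).nonneg hS.nonneg).mpr h

end MatAbs

section Orthogonal

variable {ι m n : Type*} [Fintype ι] [Fintype m] [DecidableEq m] [Fintype n] [DecidableEq n]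
  {A : ι → Matrix m m ℂ}

lemma matAbs_sum_kronecker_of_orthogonal (hA : ∀ i, (A i).PosSemidef)
    (hAA : ∀ i j, i ≠ j → A i * A j = 0) (M : ι → Matrix n n ℂ) :
    matAbs (∑ i, A i ⊗ₖ M i) = ∑ i, A i ⊗ₖ matAbs (M i) := by
  refine matAbs_eq_of_mul_self
    (posSemidef_sum _ fun i _ => (hA i).kronecker (posSemidef_matAbs _)) ?_
  simp only [conjTranspose_sum, conjTranspose_kronecker, (hA _).1.eq]
  rw [sum_kronecker_mul_sum_kronecker_of_orthogonal _ _ _ hAA,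
    sum_kronecker_mul_sum_kronecker_of_orthogonal _ _ _ hAA]
  simp only [matAbs_mul_self]

lemma traceNorm_sum_kronecker_of_orthogonal (hA : ∀ i, (A i).PosSemidef)
    (hAA : ∀ i j, i ≠ j → A i * A j = 0) (M : ι → Matrix n n ℂ) :
    traceNorm (∑ i, A i ⊗ₖ M i) = ∑ i, (A i).trace * traceNorm (M i) := by
  simp only [traceNorm, matAbs_sum_kronecker_of_orthogonal hA hAA, trace_sum, trace_kronecker]

end Orthogonal

theorem negativity_sum_orthogonal_general
    {ι a' a'' b : Type*} [Fintype ι] [Fintype a'] [DecidableEq a']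
    [Fintype a''] [DecidableEq a''] [Fintype b] [DecidableEq b]
    (p : ι → ℝ) (φ : ι → Matrix a' a' ℂ) (σ : ι → Matrix (a'' × b) (a'' × b) ℂ)
    (hp : ∀ i, 0 ≤ p i)
    (hφpos : ∀ i, (φ i).PosSemidef) (hφtr : ∀ i, (φ i).trace = 1)
    (hφorth : ∀ i j, i ≠ j → φ i * φ j = 0) :
    negativityA'A''B (∑ i, (p i : ℂ) • ((φ i) ⊗ₖ (σ i))) =
      ∑ i, (p i : ℂ) * negativityAB (σ i) := by
  have hpos : ∀ i, ((p i : ℂ) • φ i).PosSemidef := fun i =>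
    (hφpos i).smul (by exact_mod_cast hp i)
  have horth : ∀ i j, i ≠ j → ((p i : ℂ) • φ i) * ((p j : ℂ) • φ j) = 0 := fun i j hij => by
    rw [smul_mul_smul_comm, hφorth i j hij, smul_zero]
  have htr : ∀ i, ((p i : ℂ) • φ i).trace = p i := fun i => by
    rw [trace_smul, hφtr i, smul_eq_mul, mul_one]
  simp only [← smul_kronecker]
  rw [negativityA'A''B, ptB3_sum]
  simp only [ptB3_kronecker, traceNorm_sum_kronecker_of_orthogonal hpos horth, trace_sum,
    trace_kronecker, htr, negativityAB, Finset.mul_sum, ← Finset.sum_sub_distrib]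
  exact Finset.sum_congr rfl fun i _ => by ring

/-- For `ρ_AB = ∑ i, p i • φ_{A,i} ⊗ σ_{AB,i}` with mutually orthogonal density
matrices `φ_{A,i}` on `H_{A'}` and density matrices `σ_{AB,i}` on `H_{A''} ⊗ H_B`,
the negativity across the `A|B` cut is `N[ρ_AB] = ∑ i, p i * N[σ_{AB,i}]`. -/
theorem negativity_sum_orthogonal
    {ι a' a'' b : Type*} [Fintype ι] [Fintype a'] [DecidableEq a']
    [Fintype a''] [DecidableEq a''] [Fintype b] [DecidableEq b]
    (p : ι → ℝ) (φ : ι → Matrix a' a' ℂ) (σ : ι → Matrix (a'' × b) (a'' × b) ℂ)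
    (hp : ∀ i, 0 ≤ p i) (hpsum : ∑ i, p i = 1)
    (hφpos : ∀ i, (φ i).PosSemidef) (hφtr : ∀ i, (φ i).trace = 1)
    (hφorth : ∀ i j, i ≠ j → φ i * φ j = 0)
    (hσpos : ∀ i, (σ i).PosSemidef) (hσtr : ∀ i, (σ i).trace = 1) :
    negativityA'A''B (∑ i, (p i : ℂ) • ((φ i) ⊗ₖ (σ i))) =
      ∑ i, (p i : ℂ) * negativityAB (σ i) :=
  negativity_sum_orthogonal_general p φ σ hp hφpos hφtr hφorth
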